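/- arXiv:0810.4620 — 2 statements merged into one kernel-verified Lean document; each statement's English description precedes it below -/
import Mathlib

section
/- For a finitely generated abelian group A written as a direct product of cyclic groups ⟨a₁⟩ × ⋯ × ⟨a_s⟩, the tensor square A ⊗ A (over ℤ) decomposes as the internal direct sum of the subgroup ∇(A) generated by {aᵢ ⊗ aᵢ : i} ∪ {(aᵢ ⊗ aⱼ)(aⱼ ⊗ aᵢ) : i < j} and the subgroup generated by {aᵢ ⊗ aⱼ : i < j}. -/
/-!
The swap `x ⊗ y ↦ y ⊗ x` fixes `∇(A)` pointwise. The cyclic decomposition gives projections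
`πᵢ : A → A` onto the factors, and `P = ∑_{i<j} πᵢ ⊗ πⱼ` is the identity on the span of the
`aᵢ ⊗ aⱼ` (`i < j`) but kills the swap of that span. So an element `x` of both subgroups
satisfies `x = P x = P (swap x) = 0`. Conversely `aⱼ ⊗ aᵢ = (aᵢ ⊗ aⱼ + aⱼ ⊗ aᵢ) - aᵢ ⊗ aⱼ`
for `i < j`, so the two subgroups together contain every `aᵢ ⊗ aⱼ`, and these span `A ⊗ A`.
-/

open TensorProduct

namespace DirectSum.IsInternal

section

variable {R M ι : Type*} [Semiring R] [AddCommMonoid M] [Module R M] [DecidableEq ι]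
  {A : ι → Submodule R M} (h : IsInternal A)

noncomputable def componentProj (i : ι) : M →ₗ[R] M :=
  (A i).subtype ∘ₗ component R ι (fun i => A i) i ∘ₗ
    (LinearEquiv.ofBijective (coeLinearMap A) h).symm.toLinearMap

theorem componentProj_apply_of_mem {i j : ι} {x : M} (hx : x ∈ A i) :
    h.componentProj j x = if i = j then x else 0 := by
  split_ifs with hij
  · subst hij
    simp [componentProj, ← apply_eq_component, h.ofBijective_coeLinearMap_of_mem hx]
  · simp [componentProj, ← apply_eq_component, h.ofBijective_coeLinearMap_of_mem_ne hij hx]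

end

section TensorSquare

variable {R M ι : Type*} [CommSemiring R] [AddCommMonoid M] [Module R M] [Fintype ι]
  [LinearOrder ι] {A : ι → Submodule R M} (h : IsInternal A)

noncomputable def strictUpperProj : M ⊗[R] M →ₗ[R] M ⊗[R] M :=
  ∑ p ∈ Finset.univ.filter (fun p : ι × ι => p.1 < p.2),
    TensorProduct.map (h.componentProj p.1) (h.componentProj p.2)

theorem strictUpperProj_tmul_of_mem {i j : ι} {x y : M} (hx : x ∈ A i) (hy : y ∈ A j) :
    h.strictUpperProj (x ⊗ₜ y) = if i < j then x ⊗ₜ y else 0 := by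
  have hterm (p : ι × ι) : h.componentProj p.1 x ⊗ₜ[R] h.componentProj p.2 y =
      if (i, j) = p then x ⊗ₜ y else 0 := by
    rw [h.componentProj_apply_of_mem hx, h.componentProj_apply_of_mem hy, ite_tmul,
      tmul_ite, ← ite_and]
    simp only [Prod.ext_iff]
  simp only [strictUpperProj, LinearMap.sum_apply, map_tmul, hterm,
    Finset.sum_ite_eq, Finset.mem_filter, Finset.mem_univ, true_and]

end TensorSquare

end DirectSum.IsInternal

namespace TensorProduct

section CommSemiring

variable (R : Type*) {M ι : Type*} [CommSemiring R] [AddCommMonoid M] [Module R M] [LinearOrder ι]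
  (a : ι → M)

def nabla : Submodule R (M ⊗[R] M) :=
  Submodule.span R ((Set.range fun i => a i ⊗ₜ[R] a i) ∪
    {x | ∃ i j, i < j ∧ x = a i ⊗ₜ[R] a j + a j ⊗ₜ[R] a i})

def strictUpperSpan : Submodule R (M ⊗[R] M) :=
  Submodule.span R {x | ∃ i j, i < j ∧ x = a i ⊗ₜ[R] a j}

variable {R a}

theorem comm_apply_of_mem_nabla {x : M ⊗[R] M} (hx : x ∈ nabla R a) :
    TensorProduct.comm R M M x = x := by
  refine LinearMap.eqOn_span (f := (TensorProduct.comm R M M).toLinearMap) (g := .id) ?_ hx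
  rintro _ (⟨i, rfl⟩ | ⟨i, j, -, rfl⟩)
  · simp
  · simp [add_comm]

variable [Fintype ι] (h : DirectSum.IsInternal fun i => Submodule.span R {a i})

theorem strictUpperProj_apply_of_mem_strictUpperSpan {x : M ⊗[R] M}
    (hx : x ∈ strictUpperSpan R a) : h.strictUpperProj x = x := by
  refine LinearMap.eqOn_span (f := h.strictUpperProj) (g := .id) ?_ hx
  rintro _ ⟨i, j, hij, rfl⟩
  simp [h.strictUpperProj_tmul_of_mem (Submodule.mem_span_singleton_self _)
    (Submodule.mem_span_singleton_self _), hij]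

theorem strictUpperProj_comm_apply_of_mem_strictUpperSpan {x : M ⊗[R] M}
    (hx : x ∈ strictUpperSpan R a) : h.strictUpperProj (TensorProduct.comm R M M x) = 0 := by
  refine LinearMap.eqOn_span (f := h.strictUpperProj ∘ₗ (TensorProduct.comm R M M).toLinearMap)
    (g := 0) ?_ hx
  rintro _ ⟨i, j, hij, rfl⟩
  simp [h.strictUpperProj_tmul_of_mem (Submodule.mem_span_singleton_self _)
    (Submodule.mem_span_singleton_self _), hij.not_gt]

include h in
theorem disjoint_nabla_strictUpperSpan : Disjoint (nabla R a) (strictUpperSpan R a) := by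
  refine Submodule.disjoint_def.mpr fun x hxN hxU => ?_
  calc x = h.strictUpperProj x := (strictUpperProj_apply_of_mem_strictUpperSpan h hxU).symm
    _ = h.strictUpperProj (TensorProduct.comm R M M x) := by rw [comm_apply_of_mem_nabla hxN]
    _ = 0 := strictUpperProj_comm_apply_of_mem_strictUpperSpan h hxU

end CommSemiring

section CommRing

variable {R M ι : Type*} [CommRing R] [AddCommGroup M] [Module R M] [LinearOrder ι] {a : ι → M}

theorem tmul_mem_nabla_sup_strictUpperSpan (i j : ι) :
    a i ⊗ₜ[R] a j ∈ nabla R a ⊔ strictUpperSpan R a := by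
  rcases lt_trichotomy i j with hij | rfl | hji
  · exact Submodule.mem_sup_right (Submodule.subset_span ⟨i, j, hij, rfl⟩)
  · exact Submodule.mem_sup_left (Submodule.subset_span (Or.inl ⟨i, rfl⟩))
  · have hsym : a j ⊗ₜ[R] a i + a i ⊗ₜ[R] a j ∈ nabla R a ⊔ strictUpperSpan R a :=
      Submodule.mem_sup_left (Submodule.subset_span (Or.inr ⟨j, i, hji, rfl⟩))
    have hup : a j ⊗ₜ[R] a i ∈ nabla R a ⊔ strictUpperSpan R a :=
      Submodule.mem_sup_right (Submodule.subset_span ⟨j, i, hji, rfl⟩)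
    simpa using sub_mem hsym hup

theorem codisjoint_nabla_strictUpperSpan (ha : Submodule.span R (Set.range a) = ⊤) :
    Codisjoint (nabla R a) (strictUpperSpan R a) := by
  rw [codisjoint_iff, eq_top_iff, ← map₂_mk_top_top_eq_top, ← ha,
    Submodule.map₂_span_span, Submodule.span_le]
  rintro _ ⟨_, ⟨i, rfl⟩, _, ⟨j, rfl⟩, rfl⟩
  exact tmul_mem_nabla_sup_strictUpperSpan i j

end CommRing

end TensorProduct

/-- If `A = ⟨a₁⟩ × ⋯ × ⟨a_s⟩` is a finitely generated abelian group, then `A ⊗ A` is the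
internal direct sum of `∇(A) = ⟨aᵢ ⊗ aᵢ, (aᵢ ⊗ aⱼ) + (aⱼ ⊗ aᵢ) (i<j)⟩` and
`⟨aᵢ ⊗ aⱼ (i<j)⟩`. -/
theorem stmt2 (A : Type*) [AddCommGroup A] (s : ℕ) (a : Fin s → A)
    (hA : DirectSum.IsInternal fun i : Fin s => Submodule.span ℤ ({a i} : Set A)) :
    IsCompl
      (Submodule.span ℤ
        ((Set.range fun i : Fin s => a i ⊗ₜ[ℤ] a i) ∪
          {x : A ⊗[ℤ] A | ∃ i j : Fin s, i < j ∧ x = a i ⊗ₜ[ℤ] a j + a j ⊗ₜ[ℤ] a i}))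
      (Submodule.span ℤ {x : A ⊗[ℤ] A | ∃ i j : Fin s, i < j ∧ x = a i ⊗ₜ[ℤ] a j}) :=
  ⟨disjoint_nabla_strictUpperSpan hA, codisjoint_nabla_strictUpperSpan <| by
    rw [Submodule.span_range_eq_iSup]
    exact hA.submodule_iSup_eq_top⟩
end

section
/- Let A be a finite abelian p-group with p odd. Then the subgroup ∇(A) = ⟨a ⊗ a : a ∈ A⟩ of A ⊗ A satisfies |∇(A)| ≥ p^{d(d+1)/2}, where d is the minimal number of generators of A. -/
/-!
Reducing coordinates mod `p` gives a surjection `π : A → (ZMod p)^d`. The symmetric bilinear map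
`(x, y) ↦ (x i * y j + x j * y i)` indexed by unordered pairs `{i, j}` factors through `A ⊗ A`
and sends `a ⊗ a` to twice the vector of monomials `(π a) i * (π a) j`. As `2` is a unit mod `p`,
the images of the basis vectors and of their pairwise sums already generate all
`p ^ (d (d + 1) / 2)` vectors, so `∇(A)` surjects onto a group of that order.
-/

open TensorProduct Function

section SymProd

variable {ι R : Type*} [CommRing R]

def symProd : (ι → R) →ₗ[R] (ι → R) →ₗ[R] (Sym2 ι → R) := by
  refine LinearMap.mk₂ R
    (fun x y => Sym2.lift ⟨fun i j => x i * y j + x j * y i, fun _ _ => add_comm _ _⟩)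
    ?_ ?_ ?_ ?_ <;>
  · intros
    ext s
    induction s using Sym2.ind
    simp only [Pi.add_apply, Pi.smul_apply, smul_eq_mul, Sym2.lift_mk]
    ring

@[simp]
theorem symProd_apply_mk (x y : ι → R) (i j : ι) :
    symProd x y s(i, j) = x i * y j + x j * y i :=
  rfl

theorem symProd_comm (x y : ι → R) : symProd x y = symProd y x := by
  ext s; induction s using Sym2.ind; simp only [symProd_apply_mk]; ring

theorem symProd_add_self (x y : ι → R) :
    symProd (x + y) (x + y) = symProd x x + symProd y y + (2 : R) • symProd x y := by
  simp only [map_add, LinearMap.add_apply, symProd_comm y x, two_smul]; abel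

variable [DecidableEq ι]

theorem symProd_single_self (i : ι) :
    symProd (Pi.single i (1 : R)) (Pi.single i 1) = Pi.single s(i, i) 2 := by
  ext s; induction s using Sym2.ind with | _ k l => ?_
  by_cases hk : k = i <;> by_cases hl : l = i <;> simp [hk, hl, one_add_one_eq_two]

theorem symProd_single_single_of_ne {i j : ι} (hij : i ≠ j) :
    symProd (Pi.single i (1 : R)) (Pi.single j 1) = Pi.single s(i, j) 1 := by
  ext s; induction s using Sym2.ind with | _ k l => ?_
  by_cases hk : k = i <;> by_cases hl : l = i <;> by_cases hk' : k = j <;> by_cases hl' : l = j <;>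
    simp_all [Pi.single_apply]

theorem span_range_symProd_self [Fintype ι] [Invertible (2 : R)] :
    Submodule.span R (Set.range fun x : ι → R => symProd x x) = ⊤ := by
  set V := Submodule.span R (Set.range fun x : ι → R => symProd x x)
  have hsq (x : ι → R) : symProd x x ∈ V := Submodule.subset_span ⟨x, rfl⟩
  have hpolar (x y : ι → R) : symProd x y ∈ V := by
    have h : (2 : R) • symProd x y ∈ V := by
      rw [eq_sub_of_add_eq' (symProd_add_self x y).symm]
      exact V.sub_mem (hsq _) (V.add_mem (hsq _) (hsq _))
    simpa [smul_smul] using V.smul_mem (⅟2) h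
  have hsingle (s : Sym2 ι) : Pi.single s (1 : R) ∈ V := by
    induction s using Sym2.ind with | _ i j => ?_
    by_cases hij : i = j
    · subst hij
      have h := V.smul_mem (⅟2) (hsq (Pi.single i 1))
      rwa [symProd_single_self, ← Pi.single_smul', smul_eq_mul, invOf_mul_self] at h
    · simpa only [symProd_single_single_of_ne hij] using hpolar (Pi.single i 1) (Pi.single j 1)
  refine eq_top_iff.mpr fun f _ => ?_
  rw [← Finset.univ_sum_single f]
  refine V.sum_mem fun s _ => ?_
  simpa [← Pi.single_smul'] using V.smul_mem (f s) (hsingle s)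

end SymProd

theorem AddSubgroup.toZModSubmodule_closure {M : Type*} [AddCommGroup M] (n : ℕ)
    [Module (ZMod n) M] (s : Set M) :
    AddSubgroup.toZModSubmodule n (AddSubgroup.closure s) = Submodule.span (ZMod n) s :=
  le_antisymm
    ((AddSubgroup.closure_le (Submodule.span (ZMod n) s).toAddSubgroup).mpr Submodule.subset_span)
    (Submodule.span_le.mpr AddSubgroup.subset_closure)

theorem finite_tensorProduct_int (A B : Type*) [AddCommGroup A] [AddCommGroup B] [Finite A]
    [Finite B] : Finite (A ⊗[ℤ] B) := by
  have : Module.Finite ℤ A := .of_finite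
  have : Module.Finite ℤ B := .of_finite
  have : AddGroup.FG (A ⊗[ℤ] B) := Module.Finite.iff_addGroup_fg.mp (.tensorProduct ℤ A B)
  refine AddCommGroup.finite_of_fg_isAddTorsion _ fun x => ?_
  refine isOfFinAddOrder_iff_nsmul_eq_zero.mpr ⟨Nat.card A, Nat.card_pos, ?_⟩
  induction x using TensorProduct.induction_on with
  | zero => simp
  | tmul a b => simp [TensorProduct.smul_tmul', card_nsmul_eq_zero']
  | add x y hx hy => simp_all [smul_add]

theorem closure_range_symProd_self {n : ℕ} [Invertible (2 : ZMod n)] {ι : Type*} [Fintype ι]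
    [DecidableEq ι] : AddSubgroup.closure (Set.range fun x : ι → ZMod n => symProd x x) = ⊤ := by
  apply (AddSubgroup.toZModSubmodule n).injective
  rw [AddSubgroup.toZModSubmodule_closure, span_range_symProd_self]
  rfl

theorem card_le_card_closure_tmul_self {n : ℕ} [NeZero n] (h2 : IsUnit (2 : ZMod n))
    {ι : Type*} [Fintype ι] [DecidableEq ι] {A : Type*} [AddCommGroup A] [Finite A]
    (π : A →+ ι → ZMod n) (hπ : Surjective π) :
    n ^ Fintype.card (Sym2 ι) ≤
      Nat.card (AddSubgroup.closure {x : A ⊗[ℤ] A | ∃ a : A, x = a ⊗ₜ[ℤ] a}) := by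
  let := h2.invertible
  have := finite_tensorProduct_int A A
  set S := AddSubgroup.closure {x : A ⊗[ℤ] A | ∃ a : A, x = a ⊗ₜ[ℤ] a}
  let Φ : A ⊗[ℤ] A →ₗ[ℤ] Sym2 ι → ZMod n :=
    lift ((symProd.restrictScalars₁₂ ℤ ℤ).compl₁₂ π.toIntLinearMap π.toIntLinearMap)
  have hmap : S.map Φ.toAddMonoidHom = ⊤ := by
    rw [eq_top_iff, ← closure_range_symProd_self, AddSubgroup.closure_le]
    rintro _ ⟨x, rfl⟩
    obtain ⟨a, rfl⟩ := hπ x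
    exact AddSubgroup.mem_map_of_mem _ (show a ⊗ₜ a ∈ S from AddSubgroup.subset_closure ⟨a, rfl⟩)
  calc n ^ Fintype.card (Sym2 ι) = Nat.card (Sym2 ι → ZMod n) := by simp
    _ = Nat.card (S.map Φ.toAddMonoidHom) := by rw [hmap, AddSubgroup.card_top]
    _ ≤ Nat.card S := Nat.card_le_card_of_surjective _ (AddMonoidHom.addSubgroupMap_surjective _ _)

theorem stmt11_general (p d : ℕ) (hodd : Odd p) (A : Type*) [AddCommGroup A]
    (n : Fin d → ℕ) (hn : ∀ i, 1 ≤ n i) (e : A ≃+ ∀ i : Fin d, ZMod (p ^ n i)) :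
    p ^ (d * (d + 1) / 2) ≤
      Nat.card (AddSubgroup.closure {x : A ⊗[ℤ] A | ∃ a : A, x = a ⊗ₜ[ℤ] a}) := by
  have : NeZero p := ⟨hodd.pos.ne'⟩
  have (i : Fin d) : NeZero (p ^ n i) := ⟨pow_ne_zero _ hodd.pos.ne'⟩
  have : Finite A := .of_equiv _ e.symm.toEquiv
  have h2 : IsUnit (2 : ZMod p) := by
    exact_mod_cast (ZMod.isUnit_iff_coprime 2 p).mpr (Nat.coprime_two_left.mpr hodd)
  have hdvd (i : Fin d) : p ∣ p ^ n i := dvd_pow_self p (Nat.one_le_iff_ne_zero.mp (hn i))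
  let π : A →+ Fin d → ZMod p :=
    (AddMonoidHom.piMap fun i => (ZMod.castHom (hdvd i) (ZMod p)).toAddMonoidHom).comp e
  have hπ : Surjective π :=
    (Surjective.piMap fun i => ZMod.castHom_surjective (hdvd i)).comp e.surjective
  have hcard : Fintype.card (Sym2 (Fin d)) = d * (d + 1) / 2 := by
    rw [Sym2.card, Fintype.card_fin, Nat.choose_two_right, Nat.add_sub_cancel, mul_comm]
  simpa only [hcard] using card_le_card_closure_tmul_self h2 π hπ

/-- If `A` is a finite abelian `p`-group, `p` odd, with `d` cyclic factors in an invariant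
factor type decomposition, then `∇(A) = ⟨a ⊗ a⟩ ≤ A ⊗ A` has order at least `p^(d(d+1)/2)`. -/
theorem stmt11 (p d : ℕ) (hp : p.Prime) (hodd : Odd p) (A : Type*) [AddCommGroup A]
    (n : Fin d → ℕ) (hn : ∀ i, 1 ≤ n i) (e : A ≃+ ∀ i : Fin d, ZMod (p ^ n i)) :
    p ^ (d * (d + 1) / 2) ≤
      Nat.card (AddSubgroup.closure {x : A ⊗[ℤ] A | ∃ a : A, x = a ⊗ₜ[ℤ] a}) :=
  stmt11_general p d hodd A n hn e
end
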